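/- Let Φ_0, Φ_1 be quantum channels with Kraus operators {E_i} and {F_j}. If there exist N ∈ ℕ, a unit vector |ψ⟩, and a positive semidefinite Ω_0 ≤ I such that Tr(Ω_0 (Φ_1^{⊗N}⊗I)(|ψ⟩⟨ψ|)) = 0 and Tr(Ω_0 (Φ_0^{⊗N}⊗I)(|ψ⟩⟨ψ|)) > 0, then span{E_i} ⊄ span{F_j}. -/

import Mathlib

open Matrix Kronecker BigOperators ComplexOrder

/-- `N`-fold Kronecker (tensor) product of the family of matrices `A (l 1), …, A (l N)`. -/
def kronPow {d : ℕ} {ι : Type*} (A : ι → Matrix (Fin d) (Fin d) ℂ) {N : ℕ}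
    (l : Fin N → ι) : Matrix (Fin N → Fin d) (Fin N → Fin d) ℂ :=
  fun x y => ∏ j, A (l j) (x j) (y j)

/-
If `span {E_i} ≤ span {F_j}`, every `N`-fold tensor product of the `E_i` is a linear combination
of `N`-fold tensor products of the `F_j`. The trace of the PSD effect `Ω₀` against
`(Φ₁^{⊗N} ⊗ I)(|ψ⟩⟨ψ|)` is the sum of the nonnegative numbers `⟨(F_l ⊗ I) ψ, Ω₀ (F_l ⊗ I) ψ⟩`, so
its vanishing forces `Ω₀ (F_l ⊗ I) ψ = 0` for all `l`. By linearity `Ω₀ (E_i ⊗ I) ψ = 0` for all `i` as well,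
so the trace against `(Φ₀^{⊗N} ⊗ I)(|ψ⟩⟨ψ|)` vanishes too, contradicting its positivity.
-/

section TraceOfConjugates
variable {n ι : Type*} [Fintype n] [Fintype ι]

lemma trace_mul_vecMulVec_star (Ω : Matrix n n ℂ) (w : n → ℂ) :
    (Ω * vecMulVec w (star w)).trace = star w ⬝ᵥ (Ω *ᵥ w) := by
  simp only [trace, diag, Matrix.mul_apply, vecMulVec_apply, dotProduct, mulVec,
    Pi.star_apply, Finset.mul_sum]
  refine Finset.sum_congr rfl fun a _ => Finset.sum_congr rfl fun b _ => ?_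
  ring

lemma mul_vecMulVec_star_mul_conjTranspose (B : Matrix n n ℂ) (ψ : n → ℂ) :
    B * vecMulVec ψ (star ψ) * Bᴴ = vecMulVec (B *ᵥ ψ) (star (B *ᵥ ψ)) := by
  ext a b
  simp only [Matrix.mul_apply, vecMulVec_apply, conjTranspose_apply, mulVec, dotProduct,
    Pi.star_apply, star_sum, star_mul', Finset.mul_sum, Finset.sum_mul]
  refine Finset.sum_congr rfl fun x _ => Finset.sum_congr rfl fun y _ => ?_
  ring

lemma trace_mul_sum_conj_vecMulVec (Ω : Matrix n n ℂ) (G : ι → Matrix n n ℂ) (ψ : n → ℂ) :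
    (Ω * ∑ l, G l * vecMulVec ψ (star ψ) * (G l)ᴴ).trace
      = ∑ l, star (G l *ᵥ ψ) ⬝ᵥ (Ω *ᵥ (G l *ᵥ ψ)) := by
  simp only [Finset.mul_sum, trace_sum, mul_vecMulVec_star_mul_conjTranspose,
    trace_mul_vecMulVec_star]

lemma Matrix.PosSemidef.mulVec_eq_zero_of_sum_dotProduct_eq_zero {Ω : Matrix n n ℂ}
    (hΩ : Ω.PosSemidef) {v : ι → n → ℂ} (h : ∑ l, star (v l) ⬝ᵥ (Ω *ᵥ v l) = 0) (l : ι) :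
    Ω *ᵥ v l = 0 :=
  (hΩ.dotProduct_mulVec_zero_iff (v l)).mp <|
    (Finset.sum_eq_zero_iff_of_nonneg fun l _ => hΩ.dotProduct_mulVec_nonneg (v l)).mp h l
      (Finset.mem_univ l)

end TraceOfConjugates

lemma mulVec_kronecker_one_mulVec_eq_zero_of_mem_span {n p ι : Type*} [Fintype n] [Fintype p]
    [DecidableEq p] (Ω : Matrix (n × p) (n × p) ℂ) (ψ : n × p → ℂ) {G : ι → Matrix n n ℂ}
    (hG : ∀ l, Ω *ᵥ ((G l ⊗ₖ (1 : Matrix p p ℂ)) *ᵥ ψ) = 0) {B : Matrix n n ℂ}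
    (hB : B ∈ Submodule.span ℂ (Set.range G)) :
    Ω *ᵥ ((B ⊗ₖ (1 : Matrix p p ℂ)) *ᵥ ψ) = 0 := by
  induction hB using Submodule.span_induction with
  | mem _ h => obtain ⟨l, rfl⟩ := h; exact hG l
  | zero => simp
  | add _ _ _ _ hB hC => rw [add_kronecker, add_mulVec, mulVec_add, hB, hC, add_zero]
  | smul c _ _ hB => rw [smul_kronecker, smul_mulVec, mulVec_smul, hB, smul_zero]

lemma kronPow_eq_sum_smul {d r s N : ℕ} {E : Fin r → Matrix (Fin d) (Fin d) ℂ}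
    {F : Fin s → Matrix (Fin d) (Fin d) ℂ} {c : Fin r → Fin s → ℂ}
    (hc : ∀ k, E k = ∑ j, c k j • F j) (i : Fin N → Fin r) :
    kronPow E i = ∑ l : Fin N → Fin s, (∏ j, c (i j) (l j)) • kronPow F l := by
  ext x y
  simp only [kronPow, hc, Matrix.sum_apply, Matrix.smul_apply, smul_eq_mul]
  rw [Finset.prod_univ_sum, Fintype.piFinset_univ]
  exact Finset.sum_congr rfl fun l _ => Finset.prod_mul_distrib

lemma kronPow_mem_span_range {d r s N : ℕ} {E : Fin r → Matrix (Fin d) (Fin d) ℂ}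
    {F : Fin s → Matrix (Fin d) (Fin d) ℂ}
    (hEF : Submodule.span ℂ (Set.range E) ≤ Submodule.span ℂ (Set.range F))
    (i : Fin N → Fin r) :
    kronPow E i ∈ Submodule.span ℂ (Set.range (fun l : Fin N → Fin s => kronPow F l)) := by
  choose c hc using fun k =>
    (Submodule.mem_span_range_iff_exists_fun ℂ).mp (hEF (Submodule.subset_span ⟨k, rfl⟩))
  rw [kronPow_eq_sum_smul (fun k => (hc k).symm) i]
  exact Submodule.sum_mem _ fun l _ => Submodule.smul_mem _ _ (Submodule.subset_span ⟨l, rfl⟩)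

theorem stmt17_general {d r s m N : ℕ} (E : Fin r → Matrix (Fin d) (Fin d) ℂ)
    (F : Fin s → Matrix (Fin d) (Fin d) ℂ)
    (ψ : (Fin N → Fin d) × Fin m → ℂ)
    (Ω₀ : Matrix ((Fin N → Fin d) × Fin m) ((Fin N → Fin d) × Fin m) ℂ)
    (hΩ : Ω₀.PosSemidef)
    (h0 : (Ω₀ * ∑ l : Fin N → Fin s,
        (kronPow F l ⊗ₖ (1 : Matrix (Fin m) (Fin m) ℂ)) * vecMulVec ψ (star ψ) *
          ((kronPow F l ⊗ₖ (1 : Matrix (Fin m) (Fin m) ℂ)))ᴴ).trace = 0)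
    (h1 : 0 < ((Ω₀ * ∑ i : Fin N → Fin r,
        (kronPow E i ⊗ₖ (1 : Matrix (Fin m) (Fin m) ℂ)) * vecMulVec ψ (star ψ) *
          ((kronPow E i ⊗ₖ (1 : Matrix (Fin m) (Fin m) ℂ)))ᴴ).trace).re) :
    ¬ Submodule.span ℂ (Set.range E) ≤ Submodule.span ℂ (Set.range F) := by
  intro hEF
  rw [trace_mul_sum_conj_vecMulVec] at h0 h1
  have hF0 := hΩ.mulVec_eq_zero_of_sum_dotProduct_eq_zero h0
  have hE0 : ∀ i, Ω₀ *ᵥ ((kronPow E i ⊗ₖ (1 : Matrix (Fin m) (Fin m) ℂ)) *ᵥ ψ) = 0 :=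
    fun i => mulVec_kronecker_one_mulVec_eq_zero_of_mem_span Ω₀ ψ hF0
      (kronPow_mem_span_range hEF i)
  simp [hE0] at h1

/-- for quantum channels `Φ₀`, `Φ₁` with Kraus operators `{E_i}`, `{F_j}`,
if there exist `N`, a unit vector `|ψ⟩` and an effect `0 ≤ Ω₀ ≤ I` with
`Tr(Ω₀ (Φ₁^{⊗N}⊗I)(|ψ⟩⟨ψ|)) = 0` and `Tr(Ω₀ (Φ₀^{⊗N}⊗I)(|ψ⟩⟨ψ|)) > 0`, then
`span{E_i} ⊄ span{F_j}`. -/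
theorem stmt17 {d r s m N : ℕ} (E : Fin r → Matrix (Fin d) (Fin d) ℂ)
    (F : Fin s → Matrix (Fin d) (Fin d) ℂ)
    (hE : ∑ i, (E i)ᴴ * E i = 1) (hF : ∑ j, (F j)ᴴ * F j = 1)
    (ψ : (Fin N → Fin d) × Fin m → ℂ) (hψ : star ψ ⬝ᵥ ψ = 1)
    (Ω₀ : Matrix ((Fin N → Fin d) × Fin m) ((Fin N → Fin d) × Fin m) ℂ)
    (hΩ : Ω₀.PosSemidef)
    (hΩI : ((1 : Matrix ((Fin N → Fin d) × Fin m) ((Fin N → Fin d) × Fin m) ℂ) - Ω₀).PosSemidef)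
    (h0 : (Ω₀ * ∑ l : Fin N → Fin s,
        (kronPow F l ⊗ₖ (1 : Matrix (Fin m) (Fin m) ℂ)) * vecMulVec ψ (star ψ) *
          ((kronPow F l ⊗ₖ (1 : Matrix (Fin m) (Fin m) ℂ)))ᴴ).trace = 0)
    (h1 : 0 < ((Ω₀ * ∑ i : Fin N → Fin r,
        (kronPow E i ⊗ₖ (1 : Matrix (Fin m) (Fin m) ℂ)) * vecMulVec ψ (star ψ) *
          ((kronPow E i ⊗ₖ (1 : Matrix (Fin m) (Fin m) ℂ)))ᴴ).trace).re) :
    ¬ Submodule.span ℂ (Set.range E) ≤ Submodule.span ℂ (Set.range F) :=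
  stmt17_general E F ψ Ω₀ hΩ h0 h1
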